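/- Let G be a connected graph of order n ≥ 2 with no true twin vertices, and let H be a non-complete graph of order n' ≥ 2. Then the strong resolving graph of G∘H is isomorphic to (G_SR ∘ H*) ∪ (n − |∂(G)|) disjoint copies of H*_−. -/

import Mathlib

/-!
Since `G` is connected with at least two vertices, distances in `G ∘ H` between different fibres
are those of `G`, and two vertices of one fibre are at distance `1` or `2` according as they are
adjacent in `H` or not. Hence a pair in different fibres `a ≠ c` is mutually maximally distant
exactly when `a, c` are in `G`: without true twins such `a, c` cannot be adjacent, so
`d(a, c) ≥ 2` dominates the distances inside the fibre of `c`. A pair inside one fibre is mutually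
maximally distant exactly when it is non-adjacent in `H` (distance `2` is then maximal) or
adjacent true twins of `H`, i.e. adjacent in `H*`. Splitting `∂(G ∘ H)` according to whether the
first coordinate lies in `∂(G)` gives the two parts of the decomposition.
-/

open SimpleGraph

namespace Paper

variable {α β : Type*}

/-- The lexicographic product of two simple graphs. -/
def lexProd (G : SimpleGraph α) (H : SimpleGraph β) : SimpleGraph (α × β) where
  Adj p q := G.Adj p.1 q.1 ∨ (p.1 = q.1 ∧ H.Adj p.2 q.2)
  symm := ⟨by
    rintro ⟨a, b⟩ ⟨c, d⟩ (h | ⟨h1, h2⟩)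
    · exact Or.inl h.symm
    · exact Or.inr ⟨h1.symm, h2.symm⟩⟩
  loopless := ⟨by
    rintro ⟨a, b⟩ (h | ⟨h1, h2⟩)
    · exact G.loopless.1 a h
    · exact H.loopless.1 b h2⟩

/-- `u` is maximally distant from `v`. -/
def MaxDistant (G : SimpleGraph α) (u v : α) : Prop :=
  ∀ w, G.Adj u w → G.edist v w ≤ G.edist u v

/-- `u` and `v` are mutually maximally distant. -/
def MMD (G : SimpleGraph α) (u v : α) : Prop :=
  MaxDistant G u v ∧ MaxDistant G v u

/-- Two vertices are true twins if they have the same closed neighborhood. -/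
def TrueTwins (G : SimpleGraph α) (u v : α) : Prop :=
  ∀ w, (G.Adj u w ∨ u = w) ↔ (G.Adj v w ∨ v = w)

/-- The boundary of a graph: vertices belonging to some mutually maximally distant pair. -/
def boundary (G : SimpleGraph α) : Set α := {u | ∃ v, u ≠ v ∧ MMD G u v}

/-- The strong resolving graph of `G`, with vertex set the boundary of `G`. -/
def srGraph (G : SimpleGraph α) : SimpleGraph (boundary G) where
  Adj u v := u.1 ≠ v.1 ∧ MMD G u.1 v.1
  symm := ⟨fun u v h => ⟨h.1.symm, h.2.2, h.2.1⟩⟩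
  loopless := ⟨fun u h => h.1 rfl⟩

/-- The graph `G*`: same vertices, `u ~ v` iff `d_G(u,v) ≥ 2` or `u,v` are true twins. -/
def gstar (G : SimpleGraph α) : SimpleGraph α where
  Adj u v := u ≠ v ∧ (2 ≤ G.edist u v ∨ TrueTwins G u v)
  symm := ⟨by
    rintro u v ⟨h1, (h2 | h2)⟩
    · exact ⟨h1.symm, Or.inl (by rwa [G.edist_comm] at h2)⟩
    · exact ⟨h1.symm, Or.inr fun w => (h2 w).symm⟩⟩
  loopless := ⟨fun u h => h.1 rfl⟩

/-- `G*` with its isolated vertices removed. -/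
def gstarMinus (G : SimpleGraph α) : SimpleGraph {x | ∃ y, (gstar G).Adj x y} :=
  SimpleGraph.induce _ (gstar G)

/-- Disjoint union of two graphs. -/
def disjUnion (G : SimpleGraph α) (H : SimpleGraph β) : SimpleGraph (α ⊕ β) where
  Adj x y := match x, y with
    | Sum.inl a, Sum.inl b => G.Adj a b
    | Sum.inr a, Sum.inr b => H.Adj a b
    | _, _ => False
  symm := ⟨by
    rintro (a | a) (b | b) h <;> simp_all <;> exact h.symm⟩
  loopless := ⟨by
    rintro (a | a) h <;> simp_all⟩

/-- `k` disjoint copies of a graph. -/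
def copies (k : ℕ) (G : SimpleGraph α) : SimpleGraph (Fin k × α) where
  Adj p q := p.1 = q.1 ∧ G.Adj p.2 q.2
  symm := ⟨fun p q h => ⟨h.1.symm, h.2.symm⟩⟩
  loopless := ⟨fun p h => G.loopless.1 _ h.2⟩

/-- The join `K₁ + H` of a single vertex with `H`. -/
def joinK1 (H : SimpleGraph β) : SimpleGraph (Unit ⊕ β) where
  Adj x y := match x, y with
    | Sum.inl _, Sum.inl _ => False
    | Sum.inl _, Sum.inr _ => True
    | Sum.inr _, Sum.inl _ => True
    | Sum.inr a, Sum.inr b => H.Adj a b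
  symm := ⟨by
    rintro (a | a) (b | b) h <;> simp_all <;> exact h.symm⟩
  loopless := ⟨by
    rintro (a | a) h <;> simp_all⟩

/-- `w` strongly resolves the pair `u, v`. -/
def StronglyResolves (G : SimpleGraph α) (w u v : α) : Prop :=
  G.edist w u = G.edist w v + G.edist v u ∨ G.edist w v = G.edist w u + G.edist u v

/-- A strong metric generator. -/
def IsStrongGenerator (G : SimpleGraph α) (S : Finset α) : Prop :=
  ∀ u v : α, u ≠ v → ∃ w ∈ S, StronglyResolves G w u v

/-- The strong metric dimension. -/
noncomputable def sdim (G : SimpleGraph α) : ℕ :=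
  sInf {k | ∃ S : Finset α, IsStrongGenerator G S ∧ S.card = k}

/-- A vertex cover. -/
def IsVertexCover (G : SimpleGraph α) (S : Finset α) : Prop :=
  ∀ ⦃u v : α⦄, G.Adj u v → u ∈ S ∨ v ∈ S

/-- The vertex cover number `α(G)`. -/
noncomputable def vcNum (G : SimpleGraph α) : ℕ :=
  sInf {k | ∃ S : Finset α, IsVertexCover G S ∧ S.card = k}

/-- The independence number `β(G)`. -/
noncomputable def indepNum (G : SimpleGraph α) : ℕ :=
  sSup {k | ∃ S : Finset α, (∀ u ∈ S, ∀ v ∈ S, ¬ G.Adj u v) ∧ S.card = k}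

section Distance

variable {G : SimpleGraph α} {H : SimpleGraph β} {a c x : α} {b d : β} {u v : α}

lemma two_le_edist_iff : 2 ≤ G.edist u v ↔ ¬ (G.Adj u v ∨ u = v) := by
  rw [← edist_le_one_iff_adj_or_eq, not_le, ← one_add_one_eq_two,
    ENat.add_one_le_iff ENat.one_ne_top]

@[simp]
lemma lexProd_adj {p q : α × β} :
    (lexProd G H).Adj p q ↔ G.Adj p.1 q.1 ∨ (p.1 = q.1 ∧ H.Adj p.2 q.2) :=
  Iff.rfl

lemma lexProd_adj_of_adj_fst (h : G.Adj a c) (b d : β) : (lexProd G H).Adj (a, b) (c, d) :=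
  Or.inl h

variable (H) in
def lexProd.sectionHom (d : β) : G →g lexProd G H where
  toFun x := (x, d)
  map_rel' := Or.inl

lemma edist_fst_le_length {p q : α × β} (w : (lexProd G H).Walk p q) :
    G.edist p.1 q.1 ≤ w.length := by
  induction w with
  | nil => simp
  | @cons p r q hpr _ ih =>
    rw [Walk.length_cons, Nat.cast_add, Nat.cast_one]
    rcases hpr with hG | ⟨heq, -⟩
    · calc G.edist p.1 q.1 ≤ G.edist p.1 r.1 + G.edist r.1 q.1 := SimpleGraph.edist_triangle
        _ ≤ 1 + _ := add_le_add (edist_eq_one_iff_adj.mpr hG).le ih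
        _ = _ := add_comm _ _
    · rw [heq]
      exact ih.trans le_self_add

lemma edist_fst_le_edist_lexProd (p q : α × β) :
    G.edist p.1 q.1 ≤ (lexProd G H).edist p q := by
  by_cases htop : (lexProd G H).edist p q = ⊤
  · simp [htop]
  · obtain ⟨w, hw⟩ := exists_walk_of_edist_ne_top htop
    exact hw ▸ edist_fst_le_length w

/-- Between different fibres, a shortest path of `G` lifts to `G ∘ H` with its first edge
redirected to leave from `(a, b)`. -/
lemma edist_lexProd_of_ne (hG : G.Preconnected) (hac : a ≠ c) (b d : β) :
    (lexProd G H).edist (a, b) (c, d) = G.edist a c := by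
  refine le_antisymm ?_ (edist_fst_le_edist_lexProd (a, b) (c, d))
  obtain ⟨p, hp⟩ := (hG a c).exists_walk_length_eq_edist
  cases p with
  | nil => exact absurd rfl hac
  | @cons _ y _ hay q =>
    let lift : (lexProd G H).Walk (a, b) (c, d) :=
      Walk.cons (lexProd_adj_of_adj_fst hay b d) (q.map (lexProd.sectionHom H d))
    calc (lexProd G H).edist (a, b) (c, d) ≤ lift.length := edist_le lift
      _ = G.edist a c := by
        rw [← hp, Walk.length_cons, ← Walk.length_map (lexProd.sectionHom H d) q]
        rfl

lemma edist_lexProd_fiber_le_two (hx : G.Adj a x) (b d : β) :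
    (lexProd G H).edist (a, b) (a, d) ≤ 2 := by
  simpa using edist_le (Walk.cons (lexProd_adj_of_adj_fst (H := H) hx b b)
    (Walk.cons (lexProd_adj_of_adj_fst hx.symm b d) Walk.nil))

end Distance

section MaximallyDistant

variable {G : SimpleGraph α} {H : SimpleGraph β} {a c x : α} {b d : β} {u v : α}

lemma maxDistant_iff_of_adj (h : G.Adj u v) :
    MaxDistant G u v ↔ ∀ w, G.Adj u w → G.Adj v w ∨ v = w := by
  simp only [MaxDistant, edist_eq_one_iff_adj.mpr h, edist_le_one_iff_adj_or_eq]

lemma mmd_iff_trueTwins_of_adj (h : G.Adj u v) : MMD G u v ↔ TrueTwins G u v := by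
  rw [MMD, maxDistant_iff_of_adj h, maxDistant_iff_of_adj h.symm]
  constructor
  · rintro ⟨huv, hvu⟩ w
    constructor
    · rintro (hw | rfl)
      exacts [huv w hw, Or.inl h.symm]
    · rintro (hw | rfl)
      exacts [hvu w hw, Or.inl h]
  · intro ht
    exact ⟨fun w hw => (ht w).1 (Or.inl hw), fun w hw => (ht w).2 (Or.inl hw)⟩

lemma MMD.not_adj (htw : ∀ u v : α, TrueTwins G u v → u = v) (hne : u ≠ v) (h : MMD G u v) :
    ¬ G.Adj u v :=
  fun hadj => hne (htw u v ((mmd_iff_trueTwins_of_adj hadj).mp h))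

lemma MMD.mem_boundary_right (hne : u ≠ v) (h : MMD G u v) : v ∈ boundary G :=
  ⟨u, hne.symm, h.2, h.1⟩

lemma MaxDistant.of_lexProd (hG : G.Preconnected) (hac : a ≠ c)
    (h : MaxDistant (lexProd G H) (a, b) (c, d)) : MaxDistant G a c := by
  intro w haw
  by_cases hwc : w = c
  · simp [hwc]
  · have hle := h (w, b) (Or.inl haw)
    rwa [edist_lexProd_of_ne hG (Ne.symm hwc), edist_lexProd_of_ne hG hac] at hle

lemma MaxDistant.lexProd (hG : G.Preconnected) (hac : a ≠ c) (hnadj : ¬ G.Adj a c)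
    (h : MaxDistant G a c) (b d : β) : MaxDistant (lexProd G H) (a, b) (c, d) := by
  rintro ⟨w, y⟩ hw
  rw [edist_lexProd_of_ne hG hac]
  rcases hw with haw | ⟨rfl, -⟩
  · rw [edist_lexProd_of_ne hG (fun hcw : c = w => hnadj (hcw ▸ haw))]
    exact h w haw
  · rw [edist_lexProd_of_ne hG hac.symm, SimpleGraph.edist_comm]

lemma mmd_lexProd_iff_of_ne (hG : G.Preconnected) (htw : ∀ u v : α, TrueTwins G u v → u = v)
    (hac : a ≠ c) : MMD (lexProd G H) (a, b) (c, d) ↔ MMD G a c := by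
  refine ⟨fun h => ⟨h.1.of_lexProd hG hac, h.2.of_lexProd hG hac.symm⟩, fun h => ?_⟩
  have hnadj := h.not_adj htw hac
  exact ⟨h.1.lexProd hG hac hnadj b d, h.2.lexProd hG hac.symm (fun hca => hnadj hca.symm) d b⟩

lemma trueTwins_lexProd_fiber_iff :
    TrueTwins (lexProd G H) (a, b) (a, d) ↔ TrueTwins H b d := by
  have hnbhd : ∀ (b : β) (q : α × β), (lexProd G H).Adj (a, b) q ∨ (a, b) = q ↔
      G.Adj a q.1 ∨ (a = q.1 ∧ (H.Adj b q.2 ∨ b = q.2)) := by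
    rintro b ⟨w, y⟩
    simp only [lexProd_adj, Prod.mk.injEq]
    tauto
  constructor
  · intro h y
    simpa [hnbhd] using h (a, y)
  · intro h q
    rw [hnbhd, hnbhd, h q.2]

/-- Two non-adjacent vertices of a fibre are at distance `2`, the largest distance from a
vertex of that fibre to any neighbour of the fibre. -/
lemma maxDistant_lexProd_fiber_of_not_adj (hx : G.Adj a x) (hbd : b ≠ d) (hnadj : ¬ H.Adj b d) :
    MaxDistant (lexProd G H) (a, b) (a, d) := by
  rintro ⟨w, y⟩ hw
  have hfar : 2 ≤ (lexProd G H).edist (a, b) (a, d) := by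
    simp [two_le_edist_iff, hbd, hnadj]
  refine le_trans ?_ hfar
  rcases hw with haw | ⟨rfl, -⟩
  · exact (edist_le_one_iff_adj_or_eq.mpr (Or.inl (Or.inl haw))).trans (by norm_num)
  · exact edist_lexProd_fiber_le_two hx d y

lemma mmd_lexProd_fiber_iff (hx : G.Adj a x) (hbd : b ≠ d) :
    MMD (lexProd G H) (a, b) (a, d) ↔ (gstar H).Adj b d := by
  by_cases hadj : H.Adj b d
  · rw [mmd_iff_trueTwins_of_adj (Or.inr ⟨rfl, hadj⟩), trueTwins_lexProd_fiber_iff]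
    simp [gstar, two_le_edist_iff, hbd, hadj]
  · refine iff_of_true ⟨maxDistant_lexProd_fiber_of_not_adj hx hbd hadj,
      maxDistant_lexProd_fiber_of_not_adj hx hbd.symm (fun h => hadj h.symm)⟩ ?_
    exact ⟨hbd, Or.inl (two_le_edist_iff.mpr (by simp [hbd, hadj]))⟩

lemma ne_and_mmd_lexProd_iff (hG : G.Preconnected) (hdeg : ∀ a, ∃ x, G.Adj a x)
    (htw : ∀ u v : α, TrueTwins G u v → u = v) {p q : α × β} :
    p ≠ q ∧ MMD (lexProd G H) p q ↔
      (p.1 ≠ q.1 ∧ MMD G p.1 q.1) ∨ (p.1 = q.1 ∧ (gstar H).Adj p.2 q.2) := by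
  obtain ⟨a, b⟩ := p
  obtain ⟨c, d⟩ := q
  by_cases hac : a = c
  · subst hac
    obtain ⟨x, hx⟩ := hdeg a
    by_cases hbd : b = d
    · subst hbd
      simp
    · simp [hbd, mmd_lexProd_fiber_iff hx hbd]
  · simp [hac, mmd_lexProd_iff_of_ne hG htw hac]

lemma mem_boundary_lexProd_iff (hG : G.Preconnected) (hdeg : ∀ a, ∃ x, G.Adj a x)
    (htw : ∀ u v : α, TrueTwins G u v → u = v) {p : α × β} :
    p ∈ boundary (lexProd G H) ↔ p.1 ∈ boundary G ∨ p.2 ∈ {y | ∃ z, (gstar H).Adj y z} := by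
  simp only [boundary, Set.mem_ofPred_eq, ne_and_mmd_lexProd_iff hG hdeg htw]
  constructor
  · rintro ⟨q, ⟨hne, hm⟩ | ⟨-, hst⟩⟩
    exacts [Or.inl ⟨q.1, hne, hm⟩, Or.inr ⟨q.2, hst⟩]
  · rintro (⟨c, hne, hm⟩ | ⟨z, hst⟩)
    exacts [⟨(c, p.2), Or.inl ⟨hne, hm⟩⟩, ⟨(p.1, z), Or.inr ⟨rfl, hst⟩⟩]

end MaximallyDistant

section Isomorphism

variable {ι : Type*} {G : SimpleGraph α} {H : SimpleGraph β}

section ProdSumEquiv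

variable {s : Set α} {t : Set β} {U : Set (α × β)} (hU : ∀ p, p ∈ U ↔ p.1 ∈ s ∨ p.2 ∈ t)
  (e : ↥sᶜ ≃ ι)

open scoped Classical in
noncomputable def prodSumEquivOfMemIff : s × β ⊕ ι × t ≃ U where
  toFun
    | Sum.inl (a, b) => ⟨(a, b), (hU _).2 (Or.inl a.2)⟩
    | Sum.inr (i, y) => ⟨((e.symm i).1, y), (hU _).2 (Or.inr y.2)⟩
  invFun p :=
    if ha : p.1.1 ∈ s then Sum.inl (⟨p.1.1, ha⟩, p.1.2)
    else Sum.inr (e ⟨p.1.1, ha⟩, ⟨p.1.2, ((hU p.1).1 p.2).resolve_left ha⟩)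
  left_inv := by
    rintro (⟨⟨a, ha⟩, b⟩ | ⟨i, y⟩)
    · simp [ha]
    · have : (e.symm i).1 ∉ s := (e.symm i).2
      simp [this]
  right_inv := by
    rintro ⟨⟨a, b⟩, hp⟩
    by_cases ha : a ∈ s <;> simp [ha]

@[simp]
lemma prodSumEquivOfMemIff_inl (a : s) (b : β) :
    (prodSumEquivOfMemIff hU e (Sum.inl (a, b)) : α × β) = (a.1, b) :=
  rfl

@[simp]
lemma prodSumEquivOfMemIff_inr (i : ι) (y : t) :
    (prodSumEquivOfMemIff hU e (Sum.inr (i, y)) : α × β) = ((e.symm i).1, y.1) :=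
  rfl

end ProdSumEquiv

noncomputable def srGraphLexProdIso (hG : G.Preconnected) (hdeg : ∀ a, ∃ x, G.Adj a x)
    (htw : ∀ u v : α, TrueTwins G u v → u = v) {k : ℕ} (e : ↥(boundary G)ᶜ ≃ Fin k) :
    disjUnion (lexProd (srGraph G) (gstar H)) (copies k (gstarMinus H)) ≃g
      srGraph (lexProd G H) where
  toEquiv := prodSumEquivOfMemIff (fun _ => mem_boundary_lexProd_iff hG hdeg htw) e
  map_rel_iff' {p q} := by
    change (_ ≠ _ ∧ MMD _ _ _) ↔ _
    rw [ne_and_mmd_lexProd_iff hG hdeg htw]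
    rcases p with ⟨⟨a, ha⟩, b⟩ | ⟨i, y⟩ <;> rcases q with ⟨⟨c, hc⟩, d⟩ | ⟨j, z⟩ <;>
      simp only [prodSumEquivOfMemIff_inl, prodSumEquivOfMemIff_inr]
    · simp [disjUnion, lexProd, srGraph]
    · have hj : (e.symm j).1 ∉ boundary G := (e.symm j).2
      refine iff_of_false ?_ id
      rintro (⟨hne, hm⟩ | ⟨rfl, -⟩)
      exacts [hj (hm.mem_boundary_right hne), hj ha]
    · have hi : (e.symm i).1 ∉ boundary G := (e.symm i).2
      refine iff_of_false ?_ id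
      rintro (⟨hne, hm⟩ | ⟨rfl, -⟩)
      exacts [hi ⟨c, hne, hm⟩, hi hc]
    · have hi : (e.symm i).1 ∉ boundary G := (e.symm i).2
      have hnmmd : ¬ ((e.symm i).1 ≠ (e.symm j).1 ∧ MMD G (e.symm i) (e.symm j)) :=
        fun ⟨hne, hm⟩ => hi ⟨_, hne, hm⟩
      rw [or_iff_right hnmmd, Subtype.val_inj, e.symm.apply_eq_iff_eq]
      rfl

end Isomorphism

theorem stmt_14_general [Fintype α] (G : SimpleGraph α) (H : SimpleGraph β)
    (hG : G.Connected) (hn : 2 ≤ Fintype.card α)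
    (htw : ∀ u v : α, TrueTwins G u v → u = v) :
    Nonempty (srGraph (lexProd G H) ≃g
      disjUnion (lexProd (srGraph G) (gstar H))
        (copies (Fintype.card α - Nat.card (boundary G)) (gstarMinus H))) := by
  classical
  have : Nontrivial α := Fintype.one_lt_card_iff_nontrivial.mp hn
  have hcard : Fintype.card ↥(boundary G)ᶜ = Fintype.card α - Nat.card (boundary G) := by
    rw [Fintype.card_compl_set, Nat.card_eq_fintype_card]
  exact ⟨(srGraphLexProdIso hG.preconnected hG.preconnected.exists_adj_of_nontrivial htw
    (Fintype.equivFinOfCardEq hcard)).symm⟩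

theorem stmt_14 [Fintype α] [Fintype β] (G : SimpleGraph α) (H : SimpleGraph β)
    (hG : G.Connected) (hn : 2 ≤ Fintype.card α)
    (htw : ∀ u v : α, TrueTwins G u v → u = v)
    (hH : H ≠ ⊤) (hn' : 2 ≤ Fintype.card β) :
    Nonempty (srGraph (lexProd G H) ≃g
      disjUnion (lexProd (srGraph G) (gstar H))
        (copies (Fintype.card α - Nat.card (boundary G)) (gstarMinus H))) :=
  stmt_14_general G H hG hn htw

end Paper
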